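/- arXiv:2402.03861 — 2 statements merged into one kernel-verified Lean document; each statement's English description precedes it below -/
import Mathlib

section
/- For every integer N ≥ 1, every integer n with 0 ≤ n ≤ N, and every real t, one has ∫_0^t ∫_0^ξ B_n(s) ds dξ = Σ_{m=0}^{N} B_m(t)·(P²)_{m,n} + δ_{n,N−1}·(1/N)·(B_{N+1}(t) − B_{N+1}(0))/(N+1) + δ_{n,N}·∫_0^t (B_{N+1}(ξ) − B_{N+1}(0))/(N+1) dξ, where δ_{n,j} equals 1 if n = j and 0 otherwise. -/
open scoped BigOperators

/-- The `n`-th Bernoulli polynomial evaluated at `t : ℝ`. -/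
noncomputable def B (n : ℕ) (t : ℝ) : ℝ :=
  Polynomial.aeval t (Polynomial.bernoulli n)

/-- The `(N+1) × (N+1)` matrix `P` whose only nonzero entries are
`P 0 j = -B (j+1) 0 / (j+1)` for `0 ≤ j ≤ N-1` and `P (j+1) j = 1/(j+1)` for `0 ≤ j ≤ N-1`. -/
noncomputable def Pmat (N : ℕ) : Matrix (Fin (N + 1)) (Fin (N + 1)) ℝ :=
  Matrix.of fun i j =>
    if (i : ℕ) = 0 then
      (if (j : ℕ) < N then -(B ((j : ℕ) + 1) 0) / ((j : ℕ) + 1) else 0)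
    else if (i : ℕ) = (j : ℕ) + 1 then 1 / ((j : ℕ) + 1) else 0

lemma B_continuous (n : ℕ) : Continuous (B n) :=
  Polynomial.continuous_aeval (Polynomial.bernoulli n)

lemma B_eval (n : ℕ) (t : ℝ) :
    B n t = ((Polynomial.bernoulli n).map (algebraMap ℚ ℝ)).eval t := by
  simp [B, Polynomial.aeval_def, Polynomial.eval_map]

lemma B_zero (t : ℝ) : B 0 t = 1 := by
  simp [B, Polynomial.bernoulli_zero]

lemma B_hasDerivAt (n : ℕ) (x : ℝ) :
    HasDerivAt (fun y => B (n + 1) y / (n + 1)) (B n x) x := by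
  have h := Polynomial.hasDerivAt ((Polynomial.bernoulli (n + 1)).map (algebraMap ℚ ℝ)) x
  have hder : ((Polynomial.bernoulli (n + 1)).map (algebraMap ℚ ℝ)).derivative
      = Polynomial.C ((n : ℝ) + 1) * (Polynomial.bernoulli n).map (algebraMap ℚ ℝ) := by
    rw [Polynomial.derivative_map, Polynomial.derivative_bernoulli_add_one]
    simp [Polynomial.map_mul]
  have h2 : HasDerivAt (fun y => B (n + 1) y) (((n : ℝ) + 1) * B n x) x := by
    have := h
    rw [hder] at this
    simpa [B_eval] using this
  have h3 := h2.div_const ((n : ℝ) + 1)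
  have hne : ((n : ℝ) + 1) ≠ 0 := by positivity
  simpa [mul_div_assoc, mul_div_cancel_left₀ _ hne] using h3

lemma integral_B (n : ℕ) (t : ℝ) :
    ∫ s in (0:ℝ)..t, B n s = (B (n + 1) t - B (n + 1) 0) / (n + 1) := by
  have h := intervalIntegral.integral_eq_sub_of_hasDerivAt
    (f := fun y => B (n + 1) y / (n + 1)) (f' := B n)
    (fun x _ => B_hasDerivAt n x)
    ((B_continuous n).intervalIntegrable 0 t)
  rw [h]
  ring

lemma single_integral (N : ℕ) (n : Fin (N + 1)) (t : ℝ) :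
    ∫ s in (0:ℝ)..t, B (n : ℕ) s =
      (∑ m : Fin (N + 1), B (m : ℕ) t * Pmat N m n)
        + (if (n : ℕ) = N then (1:ℝ) else 0) * ((B (N + 1) t - B (N + 1) 0) / (N + 1)) := by
  by_cases hn : (n : ℕ) = N
  · have hsum : (∑ m : Fin (N + 1), B (m : ℕ) t * Pmat N m n) = 0 := by
      apply Finset.sum_eq_zero
      intro m _
      have hm : (m : ℕ) ≤ N := Nat.lt_succ_iff.mp m.isLt
      have : Pmat N m n = 0 := by
        simp only [Pmat, Matrix.of_apply, hn]
        rw [if_neg (lt_irrefl N)]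
        split_ifs with h1 h2
        · rfl
        · omega
        · rfl
      simp [this]
    rw [hsum, hn, integral_B]
    simp
  · have hnN : (n : ℕ) < N := by
      have := Nat.lt_succ_iff.mp n.isLt
      omega
    set b : Fin (N + 1) := ⟨(n : ℕ) + 1, by omega⟩ with hb
    have h0b : (0 : Fin (N + 1)) ≠ b := by
      intro h
      have := congrArg (Fin.val) h
      simp [hb] at this
    have hP0 : Pmat N 0 n = -(B ((n : ℕ) + 1) 0) / ((n : ℕ) + 1) := by
      simp [Pmat, hnN]
    have hPb : Pmat N b n = 1 / ((n : ℕ) + 1) := by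
      simp [Pmat, hb]
    have hsum : (∑ m : Fin (N + 1), B (m : ℕ) t * Pmat N m n)
        = B 0 t * Pmat N 0 n + B ((n : ℕ) + 1) t * Pmat N b n := by
      rw [← Finset.add_sum_erase _ _ (Finset.mem_univ (0 : Fin (N + 1)))]
      congr 1
      apply Finset.sum_eq_single_of_mem b
        (Finset.mem_erase.mpr ⟨Ne.symm h0b, Finset.mem_univ b⟩)
      · intro c hc hcb
        have hc0 : c ≠ 0 := (Finset.mem_erase.mp hc).1
        have hc0' : (c : ℕ) ≠ 0 := fun h => hc0 (Fin.ext h)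
        have hcb' : (c : ℕ) ≠ (n : ℕ) + 1 := by
          intro h
          exact hcb (Fin.ext (by simp [hb, h]))
        have : Pmat N c n = 0 := by
          simp [Pmat, hc0, hc0', hcb']
        simp [this]
    rw [hsum, hP0, hPb, B_zero, integral_B, if_neg hn]
    have hne : ((n : ℕ) : ℝ) + 1 ≠ 0 := by positivity
    field_simp
    ring

lemma Pmat_last (N : ℕ) (hN : 1 ≤ N) (n : Fin (N + 1)) :
    Pmat N (Fin.last N) n = if (n : ℕ) = N - 1 then 1 / (N : ℝ) else 0 := by
  have hlast : ((Fin.last N : Fin (N + 1)) : ℕ) = N := rfl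
  simp only [Pmat, Matrix.of_apply, hlast]
  rw [if_neg (by omega : ¬ N = 0)]
  by_cases h : (n : ℕ) = N - 1
  · rw [if_pos (by omega), if_pos h]
    have : (n : ℕ) + 1 = N := by omega
    rw [show ((n : ℕ) : ℝ) + 1 = (N : ℝ) by exact_mod_cast congrArg Nat.cast this]
  · rw [if_neg (by omega), if_neg h]

set_option maxHeartbeats 1000000 in
theorem double_integral_bernoulli_eq_sum_Pmat_sq (N : ℕ) (hN : 1 ≤ N) (n : Fin (N + 1)) (t : ℝ) :
    (∫ ξ in (0:ℝ)..t, ∫ s in (0:ℝ)..ξ, B (n : ℕ) s) =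
      (∑ m : Fin (N + 1), B (m : ℕ) t * (Pmat N ^ 2) m n)
        + (if (n : ℕ) = N - 1 then (1:ℝ) else 0) *
            ((1 / (N : ℝ)) * ((B (N + 1) t - B (N + 1) 0) / (N + 1)))
        + (if (n : ℕ) = N then (1:ℝ) else 0) *
            (∫ ξ in (0:ℝ)..t, (B (N + 1) ξ - B (N + 1) 0) / (N + 1)) := by
  have key : ∀ ξ : ℝ, (∫ s in (0:ℝ)..ξ, B (n : ℕ) s) =
      (∑ m : Fin (N + 1), B (m : ℕ) ξ * Pmat N m n)
        + (if (n : ℕ) = N then (1:ℝ) else 0) * ((B (N + 1) ξ - B (N + 1) 0) / (N + 1)) :=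
    fun ξ => single_integral N n ξ
  simp only [key]
  have hint1 : ∀ m : Fin (N + 1),
      IntervalIntegrable (fun ξ => B (m : ℕ) ξ * Pmat N m n) MeasureTheory.volume 0 t :=
    fun m => ((B_continuous m).mul continuous_const).intervalIntegrable 0 t
  have hsumInt : IntervalIntegrable
      (fun ξ => ∑ m : Fin (N + 1), B (m : ℕ) ξ * Pmat N m n) MeasureTheory.volume 0 t := by
    apply Continuous.intervalIntegrable
    apply continuous_finset_sum
    intro m _
    exact (B_continuous (m : ℕ)).mul continuous_const
  have hgInt : IntervalIntegrable
      (fun ξ => (if (n : ℕ) = N then (1:ℝ) else 0) * ((B (N + 1) ξ - B (N + 1) 0) / (N + 1)))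
      MeasureTheory.volume 0 t :=
    (continuous_const.mul (((B_continuous (N+1)).sub continuous_const).div_const
      _)).intervalIntegrable 0 t
  rw [intervalIntegral.integral_add hsumInt hgInt,
    intervalIntegral.integral_finset_sum (fun m _ => hint1 m),
    intervalIntegral.integral_const_mul]
  have hstep : ∀ m : Fin (N + 1),
      (∫ ξ in (0:ℝ)..t, B (m : ℕ) ξ * Pmat N m n)
        = ((∑ k : Fin (N + 1), B (k : ℕ) t * Pmat N k m)
            + (if (m : ℕ) = N then (1:ℝ) else 0) * ((B (N + 1) t - B (N + 1) 0) / (N + 1)))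
          * Pmat N m n := by
    intro m
    rw [intervalIntegral.integral_mul_const, single_integral N m t]
  simp only [hstep]
  have expand : (∑ m : Fin (N + 1),
      ((∑ k : Fin (N + 1), B (k : ℕ) t * Pmat N k m)
        + (if (m : ℕ) = N then (1:ℝ) else 0) * ((B (N + 1) t - B (N + 1) 0) / (N + 1)))
        * Pmat N m n)
      = (∑ m : Fin (N + 1), (∑ k : Fin (N + 1), B (k : ℕ) t * Pmat N k m) * Pmat N m n)
        + (∑ m : Fin (N + 1),
            ((if (m : ℕ) = N then (1:ℝ) else 0) * ((B (N + 1) t - B (N + 1) 0) / (N + 1)))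
              * Pmat N m n) := by
    rw [← Finset.sum_add_distrib]
    exact Finset.sum_congr rfl fun m _ => by ring
  rw [expand]
  have hsq : (∑ m : Fin (N + 1), (∑ k : Fin (N + 1), B (k : ℕ) t * Pmat N k m) * Pmat N m n)
      = ∑ k : Fin (N + 1), B (k : ℕ) t * (Pmat N ^ 2) k n := by
    simp only [Finset.sum_mul]
    rw [Finset.sum_comm]
    refine Finset.sum_congr rfl fun k _ => ?_
    rw [pow_two, Matrix.mul_apply, Finset.mul_sum]
    refine Finset.sum_congr rfl fun m _ => ?_
    ring
  rw [hsq]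
  have h2 : (∑ m : Fin (N + 1),
      ((if (m : ℕ) = N then (1:ℝ) else 0) * ((B (N + 1) t - B (N + 1) 0) / (N + 1)))
        * Pmat N m n)
      = (if (n : ℕ) = N - 1 then (1:ℝ) else 0) *
          ((1 / (N : ℝ)) * ((B (N + 1) t - B (N + 1) 0) / (N + 1))) := by
    rw [Finset.sum_eq_single_of_mem (Fin.last N) (Finset.mem_univ _)]
    · have hlast : ((Fin.last N : Fin (N + 1)) : ℕ) = N := rfl
      rw [hlast, if_pos rfl, Pmat_last N hN n]
      by_cases h : (n : ℕ) = N - 1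
      · rw [if_pos h, if_pos h]; ring
      · rw [if_neg h, if_neg h]; ring
    · intro c _ hc
      have : (c : ℕ) ≠ N := by
        intro h
        exact hc (Fin.ext (by simp [h]))
      rw [if_neg this]
      ring
  rw [h2]
end

section
/- There exists an absolute constant C > 0 such that the following holds: for every infinitely differentiable function g : ℝ → ℝ and every G > 0 satisfying |g^{(i)}(t)| ≤ G for all integers i ≥ 0 and all t ∈ [0,1], if one defines the Bernoulli coefficients g_n = (1/n!)·∫_0^1 g^{(n)}(s) ds, then for every integer N ≥ 0 and every t ∈ [0,1], |g(t) − Σ_{n=0}^{N} g_n·B_n(t)| ≤ C·G·(2π)^{−N}. -/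
open scoped BigOperators
open intervalIntegral MeasureTheory Set

lemma B_eq (n : ℕ) (t : ℝ) : B n t = bernoulliFun n t := by
  rw [B, bernoulliFun, Polynomial.eval_map, Polynomial.aeval_def]

lemma contBF (k : ℕ) : Continuous (bernoulliFun k) := by
  unfold bernoulliFun; exact Polynomial.continuous _

lemma bF0 (x : ℝ) : bernoulliFun 0 x = 1 := by
  simp [bernoulliFun, Polynomial.bernoulli_zero]

lemma bF1 (x : ℝ) : bernoulliFun 1 x = x - 1/2 := by
  simp [bernoulliFun, Polynomial.bernoulli_def, Finset.sum_range_succ, _root_.bernoulli_one]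
  ring

section G

variable {g : ℝ → ℝ} (hg : ContDiff ℝ (⊤ : ℕ∞) g)
include hg

lemma contD (n : ℕ) : Continuous (iteratedDeriv n g) :=
  hg.continuous_iteratedDeriv n (by exact_mod_cast le_top)

lemma hasDerivAtD (n : ℕ) (x : ℝ) :
    HasDerivAt (iteratedDeriv n g) (iteratedDeriv (n + 1) g x) x := by
  have h1 : Differentiable ℝ (iteratedDeriv n g) :=
    hg.differentiable_iteratedDeriv n (by exact_mod_cast ENat.coe_lt_top n)
  rw [iteratedDeriv_succ]
  exact (h1 x).hasDerivAt

lemma integralD (n : ℕ) :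
    ∫ s in (0:ℝ)..1, iteratedDeriv (n + 1) g s
      = iteratedDeriv n g 1 - iteratedDeriv n g 0 :=
  intervalIntegral.integral_eq_sub_of_hasDerivAt (fun x _ => hasDerivAtD hg n x)
    ((contD hg (n + 1)).intervalIntegrable 0 1)

end G

/-- remainder kernel integral -/
noncomputable def R (g : ℝ → ℝ) (k n : ℕ) (t : ℝ) : ℝ :=
  (∫ s in (0:ℝ)..t, bernoulliFun k (t - s) * iteratedDeriv n g s) +
  ∫ s in t..(1:ℝ), bernoulliFun k (t - s + 1) * iteratedDeriv n g s

section G2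

variable {g : ℝ → ℝ} (hg : ContDiff ℝ (⊤ : ℕ∞) g)
include hg

lemma ibp (k n : ℕ) (t c a b : ℝ) :
    ∫ s in a..b, bernoulliFun (k + 1) (t - s + c) * iteratedDeriv (n + 1) g s
      = bernoulliFun (k + 1) (t - b + c) * iteratedDeriv n g b
        - bernoulliFun (k + 1) (t - a + c) * iteratedDeriv n g a
        + (k + 1 : ℝ) * ∫ s in a..b, bernoulliFun k (t - s + c) * iteratedDeriv n g s := by
  have hu : ∀ s : ℝ, HasDerivAt (fun s => bernoulliFun (k + 1) (t - s + c))
      (-((k + 1 : ℝ) * bernoulliFun k (t - s + c))) s := by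
    intro s
    have hin : HasDerivAt (fun s : ℝ => t - s + c) (-1) s := by
      simpa using ((hasDerivAt_id s).const_sub t).add_const c
    have := (hasDerivAt_bernoulliFun (k + 1) (t - s + c)).comp s hin
    simpa [Function.comp_def, Nat.add_sub_cancel, mul_comm, mul_assoc] using this
  have hcu' : Continuous fun s => -((k + 1 : ℝ) * bernoulliFun k (t - s + c)) := by
    exact (continuous_const.mul ((contBF k).comp (by continuity))).neg
  have H := intervalIntegral.integral_mul_deriv_eq_deriv_mul
    (u := fun s => bernoulliFun (k + 1) (t - s + c)) (v := iteratedDeriv n g)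
    (u' := fun s => -((k + 1 : ℝ) * bernoulliFun k (t - s + c)))
    (v' := iteratedDeriv (n + 1) g)
    (fun x _ => hu x) (fun x _ => hasDerivAtD hg n x)
    (hcu'.intervalIntegrable a b) ((contD hg (n + 1)).intervalIntegrable a b)
  rw [H]
  have : ∫ s in a..b, -((k + 1 : ℝ) * bernoulliFun k (t - s + c)) * iteratedDeriv n g s
      = -((k + 1 : ℝ) * ∫ s in a..b, bernoulliFun k (t - s + c) * iteratedDeriv n g s) := by
    rw [← intervalIntegral.integral_const_mul, ← intervalIntegral.integral_neg]
    congr 1; ext s; ring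
  rw [this]; ring

lemma R_rec (k n : ℕ) (hk : k ≠ 0) (t : ℝ) :
    R g (k + 1) (n + 1) t
      = bernoulliFun (k + 1) t * (iteratedDeriv n g 1 - iteratedDeriv n g 0)
        + (k + 1 : ℝ) * R g k n t := by
  have h1 := ibp hg k n t 0 0 t
  have h2 := ibp hg k n t 1 t 1
  have hend : bernoulliFun (k + 1) 1 = bernoulliFun (k + 1) 0 :=
    bernoulliFun_endpoints_eq_of_ne_one (by omega)
  simp only [add_zero, sub_zero, sub_self, sub_add_cancel, zero_add] at h1 h2
  simp only [R]
  rw [h1, h2, hend]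
  ring

lemma R_base (t : ℝ) :
    R g 1 1 t = bernoulliFun 1 t * (iteratedDeriv 0 g 1 - iteratedDeriv 0 g 0)
      - (g t - ∫ s in (0:ℝ)..1, g s) := by
  have h1 := ibp hg 0 0 t 0 0 t
  have h2 := ibp hg 0 0 t 1 t 1
  have hsplit : (∫ s in (0:ℝ)..t, iteratedDeriv 0 g s) + ∫ s in t..(1:ℝ), iteratedDeriv 0 g s
      = ∫ s in (0:ℝ)..1, g s := by
    rw [intervalIntegral.integral_add_adjacent_intervals
      ((contD hg 0).intervalIntegrable 0 t) ((contD hg 0).intervalIntegrable t 1)]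
    simp [iteratedDeriv_zero]
  simp only [add_zero, sub_zero, sub_self, sub_add_cancel, zero_add, Nat.cast_zero,
    bF0, one_mul] at h1 h2
  simp only [R]
  rw [h1, h2]
  simp only [iteratedDeriv_zero] at hsplit ⊢
  rw [bF1, bF1, bF1]
  linarith [hsplit]

end G2

section G3

variable {g : ℝ → ℝ} (hg : ContDiff ℝ (⊤ : ℕ∞) g)
include hg

lemma main_id (N : ℕ) (t : ℝ) :
    g t - ∑ n ∈ Finset.range (N + 1),
        ((1 / (n.factorial : ℝ)) * ∫ s in (0:ℝ)..1, iteratedDeriv n g s) * B n t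
      = (1 / ((N + 1).factorial : ℝ)) *
          (bernoulliFun (N + 1) t * (iteratedDeriv N g 1 - iteratedDeriv N g 0)
            - R g (N + 1) (N + 1) t) := by
  induction N with
  | zero =>
      rw [R_base hg t]
      simp [B_eq, bF0, iteratedDeriv_zero]
  | succ N ih =>
      have hr := R_rec hg (N + 1) (N + 1) (Nat.succ_ne_zero N) t
      have hint := integralD hg N
      have hfac : (((N + 1) + 1).factorial : ℝ) = ((N + 2) : ℝ) * ((N + 1).factorial : ℝ) := by
        rw [Nat.factorial_succ]; push_cast; ring
      have hfne : ((N + 1).factorial : ℝ) ≠ 0 :=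
        Nat.cast_ne_zero.mpr (Nat.factorial_ne_zero _)
      rw [Finset.sum_range_succ, hint, sub_add_eq_sub_sub, ih, hr, hfac, B_eq]
      have hN2 : ((N : ℝ) + 2) ≠ 0 := by positivity
      field_simp
      push_cast
      ring

end G3

lemma zint_hasSum : HasSum (fun n : ℤ => 1 / ((n : ℝ)) ^ 2) (Real.pi ^ 2 / 6 + Real.pi ^ 2 / 6) := by
  apply HasSum.of_nat_of_neg_add_one
  · simpa using hasSum_zeta_two
  · have h0 : HasSum (fun n : ℕ => (fun m : ℕ => 1 / ((m : ℝ)) ^ 2) (n + 1)) (Real.pi ^ 2 / 6) := by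
      apply (hasSum_nat_add_iff (f := fun m : ℕ => 1 / ((m : ℝ)) ^ 2) 1).mpr
      simpa using hasSum_zeta_two
    convert h0 using 2 with n
    push_cast
    ring

lemma zint_summable : Summable (fun n : ℤ => 1 / ((n : ℝ)) ^ 2) := zint_hasSum.summable

lemma bFbound2 {k : ℕ} (hk : 2 ≤ k) {x : ℝ} (hx : x ∈ Set.Icc (0:ℝ) 1) :
    |bernoulliFun k x| ≤ 6 * (k.factorial : ℝ) / (2 * Real.pi) ^ k := by
  have h := hasSum_one_div_pow_mul_fourier_mul_bernoulliFun hk hx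
  set f : ℤ → ℂ := fun n => 1 / (n : ℂ) ^ k * fourier n (x : UnitAddCircle) with hf
  have hfn : ∀ n : ℤ, ‖f n‖ ≤ 1 / ((n : ℝ)) ^ 2 := by
    intro n
    have hnorm : ‖f n‖ = 1 / |(n : ℝ)| ^ k := by
      rw [hf]
      simp only [norm_mul, norm_div, norm_one, norm_pow]
      have h2 : ‖fourier n ((x : ℝ) : UnitAddCircle)‖ = 1 := Circle.norm_coe _
      rw [h2, mul_one]
      congr 1
      simp [Complex.norm_intCast]
    rw [hnorm]
    rcases eq_or_ne n 0 with rfl | hn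
    · simp [zero_pow (by omega : k ≠ 0)]
    · have h1 : (1:ℝ) ≤ |(n : ℝ)| := by
        rw [← Int.cast_abs]
        exact_mod_cast Int.one_le_abs hn
      have h2 : |(n : ℝ)| ^ 2 ≤ |(n : ℝ)| ^ k := pow_le_pow_right₀ (by linarith) hk
      rw [← sq_abs (n : ℝ)]
      apply one_div_le_one_div_of_le (by positivity) h2
  have hsn : Summable fun n => ‖f n‖ :=
    Summable.of_nonneg_of_le (fun n => norm_nonneg _) hfn zint_summable
  have hb : ‖-(2 * (Real.pi : ℂ) * Complex.I) ^ k / (k.factorial : ℂ) * (bernoulliFun k x : ℂ)‖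
      ≤ Real.pi ^ 2 / 6 + Real.pi ^ 2 / 6 := by
    rw [← h.tsum_eq]
    exact (norm_tsum_le_tsum_norm hsn).trans
      ((Summable.tsum_le_tsum hfn hsn zint_summable).trans_eq zint_hasSum.tsum_eq)
  have e1 : ‖2 * (Real.pi : ℂ) * Complex.I‖ = 2 * Real.pi := by
    rw [norm_mul, norm_mul, Complex.norm_I, Complex.norm_two, Complex.norm_real, Real.norm_eq_abs,
      abs_of_nonneg Real.pi_pos.le, mul_one]
  have hval : ‖-(2 * (Real.pi : ℂ) * Complex.I) ^ k / (k.factorial : ℂ) * (bernoulliFun k x : ℂ)‖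
      = (2 * Real.pi) ^ k / (k.factorial : ℝ) * |bernoulliFun k x| := by
    rw [norm_mul, norm_div, norm_neg, norm_pow]
    rw [e1,
      Complex.norm_real, Real.norm_eq_abs, Complex.norm_natCast]
  rw [hval] at hb
  have hpi : Real.pi ^ 2 / 6 + Real.pi ^ 2 / 6 ≤ 6 := by
    nlinarith [Real.pi_le_four, Real.pi_pos]
  have hpow : (0:ℝ) < (2 * Real.pi) ^ k := by positivity
  have hfac : (0:ℝ) < (k.factorial : ℝ) := by exact_mod_cast Nat.factorial_pos k
  rw [div_mul_eq_mul_div, div_le_iff₀ hfac] at hb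
  rw [le_div_iff₀ hpow]
  nlinarith [hb, abs_nonneg (bernoulliFun k x)]

lemma bFbound1 {k : ℕ} (hk : k ≠ 0) {x : ℝ} (hx : x ∈ Set.Icc (0:ℝ) 1) :
    |bernoulliFun k x| ≤ 6 * (k.factorial : ℝ) / (2 * Real.pi) ^ k := by
  rcases eq_or_lt_of_le (Nat.one_le_iff_ne_zero.mpr hk) with h1 | h2
  · rw [← h1, bF1, Nat.factorial_one, pow_one, Nat.cast_one]
    have hx1 : |x - 1/2| ≤ 1/2 := abs_le.mpr ⟨by linarith [hx.1], by linarith [hx.2]⟩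
    have : (1:ℝ)/2 ≤ 6 * 1 / (2 * Real.pi) := by
      rw [le_div_iff₀ (by positivity)]
      nlinarith [Real.pi_le_four]
    linarith
  · exact bFbound2 h2 hx

theorem bernoulli_series_truncation_error :
    ∃ C : ℝ, 0 < C ∧
      ∀ g : ℝ → ℝ, ContDiff ℝ (⊤ : ℕ∞) g →
        ∀ G : ℝ, 0 < G →
          (∀ i : ℕ, ∀ t ∈ Set.Icc (0:ℝ) 1, |iteratedDeriv i g t| ≤ G) →
          ∀ N : ℕ, ∀ t ∈ Set.Icc (0:ℝ) 1,
            |g t - ∑ n ∈ Finset.range (N + 1),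
                ((1 / (n.factorial : ℝ)) * ∫ s in (0:ℝ)..1, iteratedDeriv n g s) * B n t|
              ≤ C * G * (2 * Real.pi) ^ (-(N : ℤ)) := by
  refine ⟨3, by norm_num, ?_⟩
  intro g hg G hG hbound N t ht
  obtain ⟨ht0, ht1⟩ := ht
  rw [main_id hg N t]
  set M : ℝ := 6 * ((N + 1).factorial : ℝ) / (2 * Real.pi) ^ (N + 1) with hM
  have hMnn : 0 ≤ M := by positivity
  have hMG : 0 ≤ M * G := by positivity
  have hR : |R g (N + 1) (N + 1) t| ≤ M * G := by
    have b1 : ‖∫ s in (0:ℝ)..t, bernoulliFun (N+1) (t - s) * iteratedDeriv (N+1) g s‖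
        ≤ (M * G) * |t - 0| := by
      apply intervalIntegral.norm_integral_le_of_norm_le_const
      intro s hs
      rw [Set.uIoc_of_le ht0] at hs
      obtain ⟨hs0, hst⟩ := hs
      have harg : t - s ∈ Set.Icc (0:ℝ) 1 := ⟨by linarith, by linarith⟩
      have h1 := bFbound1 (Nat.succ_ne_zero N) harg
      have h2 := hbound (N + 1) s ⟨hs0.le, by linarith⟩
      rw [Real.norm_eq_abs, abs_mul]
      exact mul_le_mul h1 h2 (abs_nonneg _) hMnn
    have b2 : ‖∫ s in t..(1:ℝ), bernoulliFun (N+1) (t - s + 1) * iteratedDeriv (N+1) g s‖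
        ≤ (M * G) * |1 - t| := by
      apply intervalIntegral.norm_integral_le_of_norm_le_const
      intro s hs
      rw [Set.uIoc_of_le ht1] at hs
      obtain ⟨hs0, hst⟩ := hs
      have harg : t - s + 1 ∈ Set.Icc (0:ℝ) 1 := ⟨by linarith, by linarith⟩
      have h1 := bFbound1 (Nat.succ_ne_zero N) harg
      have h2 := hbound (N + 1) s ⟨by linarith, hst⟩
      rw [Real.norm_eq_abs, abs_mul]
      exact mul_le_mul h1 h2 (abs_nonneg _) hMnn
    rw [Real.norm_eq_abs] at b1 b2
    rw [sub_zero, abs_of_nonneg ht0] at b1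
    rw [abs_of_nonneg (show (0:ℝ) ≤ 1 - t by linarith)] at b2
    calc |R g (N + 1) (N + 1) t| ≤ _ + _ := abs_add_le _ _
      _ ≤ M * G * t + M * G * (1 - t) := add_le_add b1 b2
      _ = M * G := by ring
  have hA : |bernoulliFun (N + 1) t * (iteratedDeriv N g 1 - iteratedDeriv N g 0)|
      ≤ M * (2 * G) := by
    rw [abs_mul]
    refine mul_le_mul (bFbound1 (Nat.succ_ne_zero N) ⟨ht0, ht1⟩) ?_ (abs_nonneg _) hMnn
    calc |iteratedDeriv N g 1 - iteratedDeriv N g 0|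
        ≤ |iteratedDeriv N g 1| + |iteratedDeriv N g 0| := abs_sub _ _
      _ ≤ G + G := add_le_add (hbound N 1 ⟨zero_le_one, le_refl 1⟩)
          (hbound N 0 ⟨le_refl 0, zero_le_one⟩)
      _ = 2 * G := by ring
  have hfac : (0:ℝ) < (((N : ℕ) + 1).factorial : ℝ) := by
    exact_mod_cast Nat.factorial_pos _
  rw [abs_mul, abs_of_nonneg (by positivity : (0:ℝ) ≤ 1 / (((N:ℕ) + 1).factorial : ℝ))]
  have h3 : |bernoulliFun (N + 1) t * (iteratedDeriv N g 1 - iteratedDeriv N g 0)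
      - R g (N + 1) (N + 1) t| ≤ 3 * (M * G) := by
    calc _ ≤ _ + _ := abs_sub _ _
      _ ≤ M * (2 * G) + M * G := add_le_add hA hR
      _ = 3 * (M * G) := by ring
  calc (1 / (((N:ℕ) + 1).factorial : ℝ)) * |_| ≤ (1 / (((N:ℕ) + 1).factorial : ℝ)) * (3 * (M * G)) := by
        exact mul_le_mul_of_nonneg_left h3 (by positivity)
    _ = 18 * G / (2 * Real.pi) ^ (N + 1) := by
        rw [hM]; field_simp; ring
    _ ≤ 3 * G * (2 * Real.pi) ^ (-(N : ℤ)) := by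
        rw [zpow_neg, zpow_natCast, div_le_iff₀ (by positivity)]
        have e : ((2 * Real.pi) ^ N)⁻¹ * (2 * Real.pi) ^ (N + 1) = 2 * Real.pi := by
          rw [pow_succ]
          field_simp
        rw [mul_assoc, e]
        nlinarith [Real.pi_gt_three, hG.le]
end
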